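/- For fixed positive reals α_1, …, α_{n+1} and the coefficients c_k of the multi-parameter generalized Wright series, the ratio |c_{k+1}/c_k| tends to 0 as k → ∞. -/

import Mathlib

/-!
Splitting off the last factor of the product defining `c (k + 1)` gives
`c (k+1) / c k = ∏ⱼ Γ(A(k+1) + aⱼ) / Γ(A(k+1) + bⱼ) · Γ(Ak + b_{n+1}) / Γ(Ak + b_{n+1} + A)`
with `A = α_{n+1}`, and the sums defining `aⱼ, bⱼ` telescope to `bⱼ - aⱼ = αⱼ > 0`.
Every factor is thus `Γ(x + a) / Γ(x + b)` with `a < b` and `x → ∞`, which tends to `0`: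
log-convexity of `Γ` gives `Γ(y + 1 - t) / Γ(y + 1) ≤ y ^ (-t)` for `0 < t ≤ 1`, and the
functional equation reduces larger gaps `b - a` to this case.
-/

open Finset Filter Real Set Topology

lemma Real.Gamma_add_le_rpow_mul_Gamma {y t : ℝ} (hy : 0 < y) (ht₀ : 0 ≤ t) (ht₁ : t ≤ 1) :
    Gamma (y + t) ≤ y ^ t * Gamma y := by
  have hconv := convexOn_log_Gamma.2 (mem_Ioi.2 hy) (mem_Ioi.2 (by linarith : 0 < y + 1))
    (sub_nonneg.2 ht₁) ht₀ (by ring)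
  have hΓ := Gamma_pos_of_pos hy
  rw [show (1 - t) • y + t • (y + 1) = y + t by simp only [smul_eq_mul]; ring] at hconv
  simp only [Function.comp_apply, smul_eq_mul, Gamma_add_one hy.ne',
    Real.log_mul hy.ne' hΓ.ne'] at hconv
  rw [← Real.log_le_log_iff (Gamma_pos_of_pos (by linarith)) (by positivity),
    Real.log_mul (by positivity) hΓ.ne', Real.log_rpow hy]
  linarith

lemma Real.Gamma_div_Gamma_add_le {x t : ℝ} (ht₀ : 0 < t) (ht₁ : t ≤ 1) (hx : 1 < x + t) :
    Gamma x / Gamma (x + t) ≤ (x + t - 1) ^ (-t) := by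
  set y := x + t - 1 with hy_def
  have hy : 0 < y := by linarith
  have hΓ := Gamma_pos_of_pos hy
  have hnum : Gamma x ≤ y ^ (1 - t) * Gamma y := by
    simpa [hy_def] using Gamma_add_le_rpow_mul_Gamma hy (by linarith) (by linarith : 1 - t ≤ 1)
  have hden : Gamma (x + t) = y * Gamma y := by
    rw [← Gamma_add_one hy.ne', hy_def, sub_add_cancel]
  rw [hden, div_le_iff₀ (by positivity)]
  calc Gamma x ≤ y ^ (1 - t) * Gamma y := hnum
    _ = y ^ (-t) * (y * Gamma y) := by
      rw [sub_eq_add_neg, add_comm, rpow_add hy, rpow_one]; ring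

lemma Real.tendsto_Gamma_div_Gamma_add_of_le_one {t : ℝ} (ht₀ : 0 < t) (ht₁ : t ≤ 1) :
    Tendsto (fun x => Gamma x / Gamma (x + t)) atTop (𝓝 0) := by
  have hshift : Tendsto (fun x : ℝ => x + t - 1) atTop atTop :=
    tendsto_atTop_add_const_right _ _ (tendsto_atTop_add_const_right _ _ tendsto_id)
  refine tendsto_of_tendsto_of_tendsto_of_le_of_le' tendsto_const_nhds
    ((tendsto_rpow_neg_atTop ht₀).comp hshift) ?_ ?_
  · filter_upwards [eventually_gt_atTop 0] with x hx
    exact div_nonneg (Gamma_pos_of_pos hx).le (Gamma_pos_of_pos (by linarith)).le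
  · filter_upwards [eventually_gt_atTop 1] with x hx
    exact Gamma_div_Gamma_add_le ht₀ ht₁ (by linarith)

lemma Real.tendsto_Gamma_div_Gamma_add {d : ℝ} (hd : 0 < d) :
    Tendsto (fun x => Gamma x / Gamma (x + d)) atTop (𝓝 0) := by
  suffices ∀ m : ℕ, ∀ d : ℝ, 0 < d → d ≤ m →
      Tendsto (fun x => Gamma x / Gamma (x + d)) atTop (𝓝 0) from
    this ⌈d⌉₊ d hd (Nat.le_ceil d)
  intro m
  induction m with
  | zero => intro d hd hdm; norm_num at hdm; linarith
  | succ m ih =>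
    intro d hd hdm
    rcases le_or_gt d 1 with hd₁ | hd₁
    · exact tendsto_Gamma_div_Gamma_add_of_le_one hd hd₁
    have hrec := (ih (d - 1) (by linarith) (by push_cast at hdm; linarith)).mul
      (tendsto_inv_atTop_zero.comp (tendsto_atTop_add_const_right _ (d - 1) tendsto_id))
    rw [mul_zero] at hrec
    refine hrec.congr' ?_
    filter_upwards [eventually_gt_atTop 0] with x hx
    have hpos : 0 < x + (d - 1) := by linarith
    rw [Function.comp_apply, id, show x + d = x + (d - 1) + 1 by ring, Gamma_add_one hpos.ne']
    field_simp

lemma Real.tendsto_Gamma_add_div_Gamma_add {a b : ℝ} (hab : a < b) :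
    Tendsto (fun x => Gamma (x + a) / Gamma (x + b)) atTop (𝓝 0) := by
  refine ((tendsto_Gamma_div_Gamma_add (sub_pos.2 hab)).comp
    (tendsto_atTop_add_const_right _ a tendsto_id)).congr fun x => ?_
  simp only [Function.comp_apply, id, add_add_sub_cancel]

lemma Finset.sum_Icc_one_sub_pred {M : Type*} [AddCommGroup M] (f : ℕ → M) (j : ℕ) :
    ∑ m ∈ Icc 1 j, (f m - f (m - 1)) = f j - f 0 := by
  induction j with
  | zero => simp
  | succ j ih => rw [sum_Icc_succ_top (by omega), ih, Nat.add_sub_cancel]; abel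

lemma abs_mul_div_div_le {K : Type*} [Field K] [LinearOrder K] [IsStrictOrderedRing K]
    (x q d e : K) : |x * q / e / (x / d)| ≤ |q| * |d / e| := by
  have hx : |x * x⁻¹| ≤ 1 := by
    rcases eq_or_ne x 0 with rfl | hx
    · simp
    · simp [hx]
  calc |x * q / e / (x / d)| = |x * x⁻¹| * (|q| * |d / e|) := by
        rw [← abs_mul, ← abs_mul, div_div_eq_mul_div]; congr 1; ring
    _ ≤ |q| * |d / e| := mul_le_of_le_one_left (by positivity) hx

theorem wright_multi_param_ratio_tendsto_zero_general
    (n : ℕ) (α ν : ℕ → ℝ)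
    (hα0 : α 0 = 0)
    (hα : ∀ j, 1 ≤ j → j ≤ n + 1 → 0 < α j)
    (a b : ℕ → ℝ)
    (ha : ∀ j, a j = 1 + ∑ m ∈ Icc 1 j, (ν (m - 1) - α m))
    (hb : ∀ j, b j = 1 + ∑ m ∈ Icc 1 j, (ν (m - 1) - α (m - 1)))
    (c : ℕ → ℝ)
    (hc : ∀ k, c k =
      (∏ i ∈ Icc 1 k, ∏ j ∈ Icc 1 n,
        Real.Gamma (α (n + 1) * i + a j) / Real.Gamma (α (n + 1) * i + b j)) /
      Real.Gamma (α (n + 1) * k + b (n + 1))) :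
    Tendsto (fun k : ℕ => |c (k + 1) / c k|) atTop (nhds 0) := by
  set A := α (n + 1)
  have hA : 0 < A := hα (n + 1) (by omega) le_rfl
  have hgap (j : ℕ) : b j - a j = α j := by
    calc b j - a j = ∑ m ∈ Icc 1 j, (α m - α (m - 1)) := by
          rw [ha, hb, add_sub_add_left_eq_sub, ← sum_sub_distrib]
          exact sum_congr rfl fun m _ => by ring
      _ = α j := by rw [sum_Icc_one_sub_pred, hα0, sub_zero]
  have hratio (k : ℕ) : |c (k + 1) / c k| ≤
      |∏ j ∈ Icc 1 n, Gamma (A * ↑(k + 1) + a j) / Gamma (A * ↑(k + 1) + b j)| *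
        |Gamma (A * k + b (n + 1)) / Gamma (A * k + (b (n + 1) + A))| := by
    rw [hc, hc, prod_Icc_succ_top (by omega),
      show A * ↑(k + 1) + b (n + 1) = A * k + (b (n + 1) + A) by push_cast; ring]
    exact abs_mul_div_div_le _ _ _ _
  have hAk : Tendsto (fun k : ℕ => A * k) atTop atTop :=
    tendsto_natCast_atTop_atTop.const_mul_atTop hA
  have hprod := tendsto_finsetProd (Icc 1 n) fun j hj =>
    (tendsto_Gamma_add_div_Gamma_add (a := a j) (b := b j) (by
      have := hα j (mem_Icc.1 hj).1 (by linarith [(mem_Icc.1 hj).2])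
      linarith [hgap j])).comp (hAk.comp (tendsto_add_atTop_nat 1))
  have hlast := (tendsto_Gamma_add_div_Gamma_add (lt_add_of_pos_right (b (n + 1)) hA)).comp hAk
  refine squeeze_zero (fun k => abs_nonneg _) hratio ?_
  simpa using hprod.abs.mul hlast.abs

/-- the coefficients of the multi-parameter generalized Wright
series satisfy `|c_{k+1}/c_k| → 0` as `k → ∞`, provided all `α_j > 0`. -/
theorem wright_multi_param_ratio_tendsto_zero
    (n : ℕ) (α ν : ℕ → ℝ)
    (hα0 : α 0 = 0) (hν0 : ν 0 = 0)
    (hα : ∀ j, 1 ≤ j → j ≤ n + 1 → 0 < α j)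
    (a b : ℕ → ℝ)
    (ha : ∀ j, a j = 1 + ∑ m ∈ Icc 1 j, (ν (m - 1) - α m))
    (hb : ∀ j, b j = 1 + ∑ m ∈ Icc 1 j, (ν (m - 1) - α (m - 1)))
    (hpos_a : ∀ i j : ℕ, 1 ≤ i → 1 ≤ j → j ≤ n → 0 < α (n + 1) * i + a j)
    (hpos_b : ∀ i j : ℕ, 1 ≤ i → 1 ≤ j → j ≤ n → 0 < α (n + 1) * i + b j)
    (hpos_bn : ∀ k : ℕ, 0 < α (n + 1) * k + b (n + 1))
    (c : ℕ → ℝ)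
    (hc : ∀ k, c k =
      (∏ i ∈ Icc 1 k, ∏ j ∈ Icc 1 n,
        Real.Gamma (α (n + 1) * i + a j) / Real.Gamma (α (n + 1) * i + b j)) /
      Real.Gamma (α (n + 1) * k + b (n + 1))) :
    Tendsto (fun k : ℕ => |c (k + 1) / c k|) atTop (nhds 0) :=
  wright_multi_param_ratio_tendsto_zero_general n α ν hα0 hα a b ha hb c hc
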